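/- The CNOT gate admits the measurement-based decomposition: for any input |ψ⟩_C ⊗ |+⟩_A ⊗ |φ⟩_T, applying the +1 projector (I + Z⊗Z)/2 on (C,A), then the +1 projector (I + X⊗X)/2 on (A,T), then ⟨0|_A, yields (1/2)·CNOT_{C→T}(|ψ⟩⊗|φ⟩) (up to a fixed nonzero global scalar independent of the input). -/

import Mathlib

open Matrix Kronecker

noncomputable section

abbrev Q := Fin 2
abbrev MQ := Matrix Q Q ℂ

/-- Pauli X matrix. -/
def PX : MQ := !![0, 1; 1, 0]
/-- Pauli Z matrix. -/
def PZ : MQ := !![1, 0; 0, -1]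
/-- Hadamard matrix. -/
def Had : MQ := (((Real.sqrt 2 : ℝ) : ℂ))⁻¹ • !![1, 1; 1, -1]

def ket0 : Q → ℂ := ![1, 0]
def ket1 : Q → ℂ := ![0, 1]
/-- |+⟩ = (|0⟩+|1⟩)/√2 -/
def ketP : Q → ℂ := (((Real.sqrt 2 : ℝ) : ℂ))⁻¹ • ![1, 1]

/-- Tensor product of two single-qubit states. -/
def tp2 (u v : Q → ℂ) : Q × Q → ℂ := fun p => u p.1 * v p.2
/-- Tensor product of three single-qubit states, grouped ((1,2),3). -/
def tp3 (u v w : Q → ℂ) : (Q × Q) × Q → ℂ := fun p => u p.1.1 * v p.1.2 * w p.2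

/-- Standard CNOT, first factor control, second target. -/
def CNOT2 : Matrix (Q × Q) (Q × Q) ℂ :=
  Matrix.of fun p q => if p.1 = q.1 ∧ p.2 = q.2 + q.1 then 1 else 0

/-- Single-qubit Pauli corrections: I, X, Z, XZ. -/
def IsPauli (P : MQ) : Prop := P = 1 ∨ P = PX ∨ P = PZ ∨ P = PX * PZ

/-- Z-copy spider (green) as a 4×2 matrix. -/
def dZm : Matrix (Q × Q) Q ℂ := Matrix.of fun p b => if p.1 = b ∧ p.2 = b then 1 else 0
/-- Z-merge spider (green) as a 2×4 matrix. -/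
def mZm : Matrix Q (Q × Q) ℂ := Matrix.of fun b p => if p.1 = b ∧ p.2 = b then 1 else 0
/-- X-copy spider (red): δ_X|±⟩=|±±⟩. -/
def dXm : Matrix (Q × Q) Q ℂ :=
  Matrix.of fun p b => if p.1 + p.2 = b then (((Real.sqrt 2 : ℝ) : ℂ))⁻¹ else 0
/-- X-merge spider (red): μ_X|±±⟩=|±⟩. -/
def mXm : Matrix Q (Q × Q) ℂ :=
  Matrix.of fun b p => if p.1 + p.2 = b then (((Real.sqrt 2 : ℝ) : ℂ))⁻¹ else 0
/-- Swap of the middle two wires of four, grouped ((1,2),(3,4)). -/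
def Smid : Matrix ((Q × Q) × (Q × Q)) ((Q × Q) × (Q × Q)) ℂ :=
  Matrix.of fun p q =>
    if p.1.1 = q.1.1 ∧ p.1.2 = q.2.1 ∧ p.2.1 = q.1.2 ∧ p.2.2 = q.2.2 then 1 else 0

/-- ZZ-parity projector with sign s on wires (C,A) of (C,A,T). -/
def PZZCA (s : ℂ) : Matrix ((Q × Q) × Q) ((Q × Q) × Q) ℂ :=
  (2:ℂ)⁻¹ • (1 + s • ((PZ ⊗ₖ PZ) ⊗ₖ (1 : MQ)))
/-- XX-parity projector with sign s on wires (A,T) of (C,A,T). -/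
def PXXAT (s : ℂ) : Matrix ((Q × Q) × Q) ((Q × Q) × Q) ℂ :=
  (2:ℂ)⁻¹ • (1 + s • (((1 : MQ) ⊗ₖ PX) ⊗ₖ PX))

/-! The +1 ZZ projector on `ψ ⊗ |+⟩` keeps exactly the components with ancilla equal to
control, `(1/√2) Σ_c ψ_c |c⟩|c⟩`. Reading the +1 XX projector at ancilla `0` adds the
ancilla-`0` component to the ancilla-`1` component with the target flipped, so only
`ψ_c φ_{t+c} / (2√2)` survives: the target is flipped exactly when the control is `1`. -/

lemma PZ_eq_diagonal : PZ = diagonal ![1, -1] := by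
  ext i j; fin_cases i <;> fin_cases j <;> rfl

lemma PZ_kronecker_PZ_kronecker_one_mulVec_apply (v : (Q × Q) × Q → ℂ) (c a t : Q) :
    ((PZ ⊗ₖ PZ ⊗ₖ (1 : MQ)) *ᵥ v) ((c, a), t) = (if c = a then 1 else -1) * v ((c, a), t) := by
  rw [PZ_eq_diagonal, ← diagonal_one, diagonal_kronecker_diagonal, diagonal_kronecker_diagonal,
    mulVec_diagonal]
  fin_cases c <;> fin_cases a <;> simp

lemma one_kronecker_PX_kronecker_PX_mulVec_apply (v : (Q × Q) × Q → ℂ) (c a t : Q) :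
    (((1 : MQ) ⊗ₖ PX ⊗ₖ PX) *ᵥ v) ((c, a), t) = v ((c, a + 1), t + 1) := by
  fin_cases a <;> fin_cases t <;>
    simp [mulVec, dotProduct, Fintype.sum_prod_type, Fin.sum_univ_two, PX, one_apply]

lemma PZZCA_mulVec_apply (s : ℂ) (v : (Q × Q) × Q → ℂ) (c a t : Q) :
    (PZZCA s *ᵥ v) ((c, a), t) = 2⁻¹ * (1 + s * if c = a then 1 else -1) * v ((c, a), t) := by
  simp only [PZZCA, smul_mulVec, add_mulVec, one_mulVec, Pi.smul_apply, Pi.add_apply,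
    PZ_kronecker_PZ_kronecker_one_mulVec_apply, smul_eq_mul]
  ring

lemma PXXAT_mulVec_apply (s : ℂ) (v : (Q × Q) × Q → ℂ) (c a t : Q) :
    (PXXAT s *ᵥ v) ((c, a), t) = 2⁻¹ * (v ((c, a), t) + s * v ((c, a + 1), t + 1)) := by
  simp only [PXXAT, smul_mulVec, add_mulVec, one_mulVec, Pi.smul_apply, Pi.add_apply,
    one_kronecker_PX_kronecker_PX_mulVec_apply, smul_eq_mul]

lemma PZZCA_one_mulVec_tp3_ketP (ψ φ : Q → ℂ) (c a t : Q) :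
    (PZZCA 1 *ᵥ tp3 ψ ketP φ) ((c, a), t) =
      if c = a then (Real.sqrt 2 : ℂ)⁻¹ * ψ c * φ t else 0 := by
  rw [PZZCA_mulVec_apply]
  fin_cases c <;> fin_cases a <;> simp [tp3, ketP] <;> ring

lemma CNOT2_mulVec_tp2 (ψ φ : Q → ℂ) (c t : Q) :
    (CNOT2 *ᵥ tp2 ψ φ) (c, t) = ψ c * φ (t + c) := by
  fin_cases c <;> fin_cases t <;>
    simp [mulVec, dotProduct, Fintype.sum_prod_type, Fin.sum_univ_two, CNOT2, tp2]

/-- All-outcomes-trivial lattice-surgery CNOT: +1 ZZ projector on (C,A), then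
+1 XX projector on (A,T), then ⟨0|_A, applied to ψ⊗|+⟩⊗φ, equals a fixed
nonzero scalar times CNOT_{C→T}(ψ⊗φ). -/
theorem stmt10 :
    ∃ c : ℂ, c ≠ 0 ∧ ∀ ψ φ : Q → ℂ,
      (fun p : Q × Q => ((PXXAT 1 * PZZCA 1).mulVec (tp3 ψ ketP φ)) ((p.1, 0), p.2))
      = c • (CNOT2.mulVec (tp2 ψ φ)) := by
  refine ⟨2⁻¹ * (Real.sqrt 2 : ℂ)⁻¹, by simp, fun ψ φ => funext fun ⟨c, t⟩ => ?_⟩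
  rw [← mulVec_mulVec, PXXAT_mulVec_apply, PZZCA_one_mulVec_tp3_ketP, PZZCA_one_mulVec_tp3_ketP,
    Pi.smul_apply, CNOT2_mulVec_tp2]
  fin_cases c <;> simp <;> ring
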